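/- Every path on t ≥ 2 vertices and every even cycle contain an induced subgraph on at least half of their vertices in which every vertex has odd degree; consequently, every bipartite graph with maximum degree at most 2 and no isolated vertices satisfies f_o(G) ≥ |V(G)|/2. -/

import Mathlib

open Classical in
/-- Degree of `v` within the subgraph of `G` induced by the finite vertex set `s`. -/
noncomputable def indDeg {V : Type*} (G : SimpleGraph V) (s : Finset V) (v : V) : ℕ :=
  (s.filter (fun w => G.Adj v w)).card

/-- `s` induces a subgraph of `G` in which every vertex has odd degree. -/
def IsOddSet {V : Type*} (G : SimpleGraph V) (s : Finset V) : Prop :=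
  ∀ v ∈ s, Odd (indDeg G s v)

/-- `f_o(G)`: maximum order of an induced subgraph with all degrees odd. -/
noncomputable def fo {V : Type*} (G : SimpleGraph V) : ℕ :=
  sSup {n | ∃ s : Finset V, IsOddSet G s ∧ s.card = n}

/-!
Induct on a finite vertex set `s` on which the induced degrees of a bipartite graph are 1 or 2.
Pick an edge `uv`, with `u` a leaf if there is one, delete the closed neighbourhoods of `u` and
`v` together with every vertex all of whose neighbours were deleted, and add the isolated edge
`uv` to an odd set of what remains. At most four vertices are deleted: if `u` is a leaf, the
closed neighbourhoods span at most three vertices and only the far neighbour of `v`'s other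
neighbour can be stranded; otherwise all degrees are 2, the closed neighbourhoods form a path
`a u v b`, and a stranded vertex would be adjacent to both `a` and `b`, closing a 5-cycle.
-/

open Finset

section InducedDegree

open Classical

variable {V : Type*} {G : SimpleGraph V} {s t : Finset V} {u v w : V}

lemma indDeg_pos (hw : w ∈ s) (h : G.Adj v w) : 0 < indDeg G s v :=
  card_pos.mpr ⟨w, mem_filter.mpr ⟨hw, h⟩⟩

lemma indDeg_mono (h : s ⊆ t) : indDeg G s v ≤ indDeg G t v :=
  card_le_card (filter_subset_filter _ h)

lemma eq_of_indDeg_eq_one (hv : indDeg G s v = 1) (hu : u ∈ s) (huv : G.Adj v u)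
    (hw : w ∈ s) (hwv : G.Adj v w) : w = u := by
  obtain ⟨a, ha⟩ := card_eq_one.mp hv
  have hu' : u ∈ s.filter (G.Adj v) := mem_filter.mpr ⟨hu, huv⟩
  have hw' : w ∈ s.filter (G.Adj v) := mem_filter.mpr ⟨hw, hwv⟩
  rw [ha, mem_singleton] at hu' hw'
  rw [hu', hw']

lemma exists_eq_or_eq_of_indDeg_le_two (hv : indDeg G s v ≤ 2) (hu : u ∈ s)
    (huv : G.Adj v u) : ∃ a, ∀ w ∈ s, G.Adj v w → w = u ∨ w = a := by
  have hu' : u ∈ s.filter (G.Adj v) := mem_filter.mpr ⟨hu, huv⟩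
  have hcard : #((s.filter (G.Adj v)).erase u) ≤ 1 := by
    rw [card_erase_of_mem hu']
    exact Nat.sub_le_of_le_add hv
  have : Nonempty V := ⟨u⟩
  obtain ⟨a, ha⟩ := card_le_one_iff_subset_singleton.mp hcard
  refine ⟨a, fun w hw hvw => or_iff_not_imp_left.mpr fun hwu => ?_⟩
  exact mem_singleton.mp (ha (mem_erase.mpr ⟨hwu, mem_filter.mpr ⟨hw, hvw⟩⟩))

lemma IsOddSet.insert_edge (ht : IsOddSet G t) (huv : G.Adj u v)
    (hu : ∀ y ∈ t, ¬ G.Adj u y) (hv : ∀ y ∈ t, ¬ G.Adj v y) :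
    IsOddSet G (insert u (insert v t)) := by
  intro x hx
  rcases mem_insert.mp hx with rfl | hx
  · have : (insert x (insert v t)).filter (G.Adj x) = {v} := by
      ext w
      simp only [mem_filter, mem_insert, mem_singleton]
      grind [G.loopless.irrefl]
    rw [indDeg, this]
    exact odd_one
  rcases mem_insert.mp hx with rfl | hx
  · have : (insert u (insert x t)).filter (G.Adj x) = {u} := by
      ext w
      simp only [mem_filter, mem_insert, mem_singleton]
      grind [G.loopless.irrefl, G.adj_symm]
    rw [indDeg, this]
    exact odd_one
  have : (insert u (insert v t)).filter (G.Adj x) = t.filter (G.Adj x) := by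
    rw [filter_insert, if_neg fun h => hu x hx h.symm, filter_insert,
      if_neg fun h => hv x hx h.symm]
  rw [indDeg, this]
  exact ht x hx

lemma indDeg_univ [Fintype V] [DecidableRel G.Adj] (v : V) :
    indDeg G univ v = G.degree v := by
  rw [← G.card_neighborFinset_eq_degree, G.neighborFinset_eq_filter, indDeg]
  congr

lemma card_le_fo [Fintype V] (ht : IsOddSet G t) : #t ≤ fo G :=
  le_csSup ⟨Fintype.card V, fun _ ⟨s, _, hs⟩ => hs ▸ card_le_univ s⟩ ⟨t, ht, rfl⟩

end InducedDegree

section Pruning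

open Classical

variable {V : Type*} (G : SimpleGraph V) (s X : Finset V) (u v : V)

noncomputable def edgeNbhd : Finset V :=
  s.filter fun x => x = u ∨ x = v ∨ G.Adj u x ∨ G.Adj v x

noncomputable def stranded : Finset V :=
  s.filter fun y => y ∉ X ∧ ∀ z ∈ s, G.Adj y z → z ∈ X

noncomputable def prune : Finset V :=
  s.filter fun y => y ∉ X ∧ ∃ z ∈ s, G.Adj y z ∧ z ∉ X

variable {G s X u v}

@[simp]
lemma mem_edgeNbhd {x : V} :
    x ∈ edgeNbhd G s u v ↔ x ∈ s ∧ (x = u ∨ x = v ∨ G.Adj u x ∨ G.Adj v x) :=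
  mem_filter

@[simp]
lemma mem_stranded {y : V} :
    y ∈ stranded G s X ↔ y ∈ s ∧ y ∉ X ∧ ∀ z ∈ s, G.Adj y z → z ∈ X :=
  mem_filter

@[simp]
lemma mem_prune {y : V} :
    y ∈ prune G s X ↔ y ∈ s ∧ y ∉ X ∧ ∃ z ∈ s, G.Adj y z ∧ z ∉ X :=
  mem_filter

lemma stranded_subset : stranded G s X ⊆ s := filter_subset _ _

lemma prune_subset : prune G s X ⊆ s := filter_subset _ _

lemma subset_union_stranded_union_prune : s ⊆ X ∪ stranded G s X ∪ prune G s X := by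
  intro y hy
  simp only [mem_union, mem_stranded, mem_prune]
  by_cases hall : ∀ z ∈ s, G.Adj y z → z ∈ X
  · tauto
  · push Not at hall
    tauto

lemma exists_adj_of_mem_prune {y : V} (hy : y ∈ prune G s X) :
    ∃ z ∈ prune G s X, G.Adj y z := by
  obtain ⟨hys, hyX, z, hzs, hyz, hzX⟩ := mem_prune.mp hy
  exact ⟨z, mem_prune.mpr ⟨hzs, hzX, y, hys, hyz.symm, hyX⟩, hyz⟩

lemma card_edgeNbhd_add_card_stranded_le_of_indDeg_eq_one
    (hiso : ∀ y ∈ s, ∃ z ∈ s, G.Adj y z) (hdeg : ∀ y ∈ s, indDeg G s y ≤ 2)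
    (hu : u ∈ s) (hv : v ∈ s) (huv : G.Adj u v) (hleaf : indDeg G s u = 1) :
    #(edgeNbhd G s u v) + #(stranded G s (edgeNbhd G s u v)) ≤ 4 := by
  set X := edgeNbhd G s u v
  have hNu : ∀ x ∈ s, G.Adj u x → x = v := fun x hx h => eq_of_indDeg_eq_one hleaf hv huv hx h
  obtain ⟨b, hNv⟩ := exists_eq_or_eq_of_indDeg_le_two (hdeg v hv) hu huv.symm
  have hX : X ⊆ {u, v, b} := by
    intro x hx
    obtain ⟨hxs, hx⟩ := mem_edgeNbhd.mp hx
    simp only [mem_insert, mem_singleton]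
    rcases hx with h | h | h | h
    · exact Or.inl h
    · exact Or.inr (Or.inl h)
    · exact Or.inr (Or.inl (hNu x hxs h))
    · rcases hNv x hxs h with h | h <;> simp [h]
  have hY : ∀ y ∈ stranded G s X, y ≠ v ∧ b ∈ s ∧ G.Adj v b ∧ G.Adj b y := by
    intro y hy
    obtain ⟨hys, hyX, hyall⟩ := mem_stranded.mp hy
    simp only [X, mem_edgeNbhd, not_and, not_or] at hyX
    obtain ⟨hyu, hyv, hnuy, hnvy⟩ := hyX hys
    obtain ⟨z, hzs, hyz⟩ := hiso y hys
    obtain ⟨-, hz⟩ := mem_edgeNbhd.mp (hyall z hzs hyz)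
    rcases hz with rfl | rfl | h | h
    · exact absurd hyz.symm hnuy
    · exact absurd hyz.symm hnvy
    · exact absurd (hNu z hzs h ▸ hyz.symm) hnvy
    · rcases hNv z hzs h with rfl | rfl
      · exact absurd hyz.symm hnuy
      · exact ⟨hyv, hzs, h, hyz.symm⟩
  have hYcard : #(stranded G s X) ≤ 1 := by
    refine card_le_one.mpr fun y₁ hy₁ y₂ hy₂ => ?_
    obtain ⟨hy₁v, hbs, hvb, hby₁⟩ := hY y₁ hy₁
    obtain ⟨hy₂v, -, -, hby₂⟩ := hY y₂ hy₂
    obtain ⟨c, hNb⟩ := exists_eq_or_eq_of_indDeg_le_two (hdeg b hbs) hv hvb.symm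
    rw [(hNb y₁ (stranded_subset hy₁) hby₁).resolve_left hy₁v,
      (hNb y₂ (stranded_subset hy₂) hby₂).resolve_left hy₂v]
  have hXcard : #X ≤ 3 := (card_le_card hX).trans card_le_three
  omega

lemma card_edgeNbhd_add_card_stranded_le_of_indDeg_eq_two (hcol : G.Colorable 2)
    (hreg : ∀ y ∈ s, indDeg G s y = 2) (hu : u ∈ s) (hv : v ∈ s) (huv : G.Adj u v) :
    #(edgeNbhd G s u v) + #(stranded G s (edgeNbhd G s u v)) ≤ 4 := by
  set X := edgeNbhd G s u v
  obtain ⟨a, hNu⟩ := exists_eq_or_eq_of_indDeg_le_two (hreg u hu).le hv huv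
  obtain ⟨b, hNv⟩ := exists_eq_or_eq_of_indDeg_le_two (hreg v hv).le hu huv.symm
  have hX : X ⊆ {u, v, a, b} := by
    intro x hx
    obtain ⟨hxs, hx⟩ := mem_edgeNbhd.mp hx
    simp only [mem_insert, mem_singleton]
    rcases hx with h | h | h | h
    · exact Or.inl h
    · exact Or.inr (Or.inl h)
    · rcases hNu x hxs h with h | h <;> simp [h]
    · rcases hNv x hxs h with h | h <;> simp [h]
  have hY : stranded G s X = ∅ := by
    refine eq_empty_of_forall_notMem fun y hy => ?_
    obtain ⟨hys, hyX, hyall⟩ := mem_stranded.mp hy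
    simp only [X, mem_edgeNbhd, not_and, not_or] at hyX
    obtain ⟨-, -, hnuy, hnvy⟩ := hyX hys
    have hnb : ∀ z ∈ s, G.Adj y z → (z = a ∧ G.Adj u a) ∨ (z = b ∧ G.Adj v b) := by
      intro z hzs hyz
      obtain ⟨-, hz⟩ := mem_edgeNbhd.mp (hyall z hzs hyz)
      rcases hz with rfl | rfl | h | h
      · exact absurd hyz.symm hnuy
      · exact absurd hyz.symm hnvy
      · rcases hNu z hzs h with rfl | rfl
        · exact absurd hyz.symm hnvy
        · exact Or.inl ⟨rfl, h⟩
      · rcases hNv z hzs h with rfl | rfl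
        · exact absurd hyz.symm hnuy
        · exact Or.inr ⟨rfl, h⟩
    have hpentagon : G.Adj y a → G.Adj u a → G.Adj v b → G.Adj y b → False := by
      intro hya hua hvb hyb
      have := (SimpleGraph.Walk.cons hya <| .cons hua.symm <| .cons huv <| .cons hvb <|
        .cons hyb.symm .nil).three_le_chromaticNumber_of_odd_loop ⟨2, rfl⟩
      have := this.trans hcol.chromaticNumber_le
      norm_num at this
    have h2 : 1 < indDeg G s y := by rw [hreg y hys]; norm_num
    obtain ⟨z₁, hz₁, z₂, hz₂, hne⟩ := one_lt_card.mp h2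
    obtain ⟨hz₁s, hyz₁⟩ := mem_filter.mp hz₁
    obtain ⟨hz₂s, hyz₂⟩ := mem_filter.mp hz₂
    rcases hnb z₁ hz₁s hyz₁ with ⟨rfl, h₁⟩ | ⟨rfl, h₁⟩ <;>
      rcases hnb z₂ hz₂s hyz₂ with ⟨rfl, h₂⟩ | ⟨rfl, h₂⟩
    · exact hne rfl
    · exact hpentagon hyz₁ h₁ h₂ hyz₂
    · exact hpentagon hyz₂ h₂ h₁ hyz₁
    · exact hne rfl
  have hXcard : #X ≤ 4 := (card_le_card hX).trans card_le_four
  rw [hY, card_empty]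
  omega

end Pruning

section Bipartite

variable {V : Type*} {G : SimpleGraph V}

lemma exists_edge_card_edgeNbhd_add_card_stranded_le (hcol : G.Colorable 2) {s : Finset V}
    (hs : s.Nonempty) (hiso : ∀ y ∈ s, ∃ z ∈ s, G.Adj y z) (hdeg : ∀ y ∈ s, indDeg G s y ≤ 2) :
    ∃ u ∈ s, ∃ v ∈ s, G.Adj u v ∧
      #(edgeNbhd G s u v) + #(stranded G s (edgeNbhd G s u v)) ≤ 4 := by
  by_cases hleaf : ∃ u ∈ s, indDeg G s u = 1
  · obtain ⟨u, hu, hu1⟩ := hleaf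
    obtain ⟨v, hv, huv⟩ := hiso u hu
    exact ⟨u, hu, v, hv, huv,
      card_edgeNbhd_add_card_stranded_le_of_indDeg_eq_one hiso hdeg hu hv huv hu1⟩
  · push Not at hleaf
    have hreg : ∀ y ∈ s, indDeg G s y = 2 := fun y hy => by
      obtain ⟨z, hz, hyz⟩ := hiso y hy
      have := indDeg_pos hz hyz
      have := hdeg y hy
      have := hleaf y hy
      omega
    obtain ⟨u, hu⟩ := hs
    obtain ⟨v, hv, huv⟩ := hiso u hu
    exact ⟨u, hu, v, hv, huv,
      card_edgeNbhd_add_card_stranded_le_of_indDeg_eq_two hcol hreg hu hv huv⟩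

theorem exists_isOddSet_subset_card_le_two_mul (hcol : G.Colorable 2) (s : Finset V)
    (hiso : ∀ y ∈ s, ∃ z ∈ s, G.Adj y z) (hdeg : ∀ y ∈ s, indDeg G s y ≤ 2) :
    ∃ t ⊆ s, IsOddSet G t ∧ #s ≤ 2 * #t := by
  classical
  induction s using Finset.strongInduction with
  | H s ih =>
  obtain rfl | hs := s.eq_empty_or_nonempty
  · exact ⟨∅, empty_subset _, fun _ h => absurd h (notMem_empty _), by simp⟩
  obtain ⟨u, hu, v, hv, huv, hcard⟩ :=
    exists_edge_card_edgeNbhd_add_card_stranded_le hcol hs hiso hdeg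
  set X := edgeNbhd G s u v
  have huX : u ∈ X := mem_edgeNbhd.mpr ⟨hu, Or.inl rfl⟩
  have hvX : v ∈ X := mem_edgeNbhd.mpr ⟨hv, Or.inr (Or.inl rfl)⟩
  have hss : prune G s X ⊂ s :=
    (ssubset_iff_of_subset prune_subset).mpr ⟨u, hu, fun h => (mem_prune.mp h).2.1 huX⟩
  obtain ⟨t, hts, ht, hcard'⟩ := ih _ hss (fun _ => exists_adj_of_mem_prune)
    (fun y hy => (indDeg_mono prune_subset).trans (hdeg y (prune_subset hy)))
  have hfar : ∀ y ∈ t, y ∈ s ∧ y ∉ X := fun y hy => (mem_prune.mp (hts hy)).imp_right And.left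
  have hnu : ∀ y ∈ t, ¬ G.Adj u y := fun y hy h =>
    (hfar y hy).2 (mem_edgeNbhd.mpr ⟨(hfar y hy).1, Or.inr (Or.inr (Or.inl h))⟩)
  have hnv : ∀ y ∈ t, ¬ G.Adj v y := fun y hy h =>
    (hfar y hy).2 (mem_edgeNbhd.mpr ⟨(hfar y hy).1, Or.inr (Or.inr (Or.inr h))⟩)
  refine ⟨insert u (insert v t), insert_subset hu (insert_subset hv (hts.trans prune_subset)),
    ht.insert_edge huv hnu hnv, ?_⟩
  have hut : u ∉ insert v t := by
    simp only [mem_insert, not_or]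
    exact ⟨G.ne_of_adj huv, fun h => (hfar u h).2 huX⟩
  rw [card_insert_of_notMem hut, card_insert_of_notMem fun h => (hfar v h).2 hvX]
  calc #s ≤ #(X ∪ stranded G s X ∪ prune G s X) := card_le_card subset_union_stranded_union_prune
    _ ≤ #X + #(stranded G s X) + #(prune G s X) :=
      (card_union_le _ _).trans (Nat.add_le_add_right (card_union_le _ _) _)
    _ ≤ 2 * (#t + 1 + 1) := by omega

theorem card_le_two_mul_fo [Fintype V] [DecidableRel G.Adj] (hcol : G.Colorable 2)
    (hdeg : ∀ v, G.degree v ≤ 2) (hiso : ∀ v, ∃ w, G.Adj v w) :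
    Fintype.card V ≤ 2 * fo G := by
  obtain ⟨t, -, ht, hcard⟩ := exists_isOddSet_subset_card_le_two_mul hcol univ
    (fun v _ => (hiso v).imp fun w hw => ⟨mem_univ w, hw⟩)
    (fun v _ => (indDeg_univ v).trans_le (hdeg v))
  rw [card_univ] at hcard
  exact hcard.trans (Nat.mul_le_mul_left 2 (card_le_fo ht))

end Bipartite

open SimpleGraph in
lemma le_two_mul_fo_pathGraph {t : ℕ} (ht : 2 ≤ t) : t ≤ 2 * fo (pathGraph t) := by
  classical
  have : Nontrivial (Fin t) := Fin.nontrivial_iff_two_le.mpr ht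
  obtain ⟨n, rfl⟩ : ∃ n, t = n + 2 := ⟨t - 2, by omega⟩
  have hdeg (v : Fin (n + 2)) : (pathGraph (n + 2)).degree v ≤ 2 :=
    (degree_le_of_le pathGraph_le_cycleGraph).trans (cycleGraph_degree_two_le ▸ card_le_two)
  simpa using card_le_two_mul_fo (pathGraph.bicoloring _).colorable hdeg
    (pathGraph_preconnected _).exists_adj_of_nontrivial

open SimpleGraph in
lemma le_two_mul_fo_cycleGraph {ℓ : ℕ} (hℓ : 3 ≤ ℓ) (heven : Even ℓ) :
    ℓ ≤ 2 * fo (cycleGraph ℓ) := by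
  classical
  have : Nontrivial (Fin ℓ) := Fin.nontrivial_iff_two_le.mpr (by omega)
  obtain ⟨n, rfl⟩ : ∃ n, ℓ = n + 3 := ⟨ℓ - 3, by omega⟩
  simpa using card_le_two_mul_fo (cycleGraph.bicoloring_of_even _ heven).colorable
    (fun _ => cycleGraph_degree_three_le.le) cycleGraph_preconnected.exists_adj_of_nontrivial

/-- Paths on ≥ 2 vertices and even cycles have odd induced subgraphs on at least half of
their vertices; consequently every bipartite graph with maximum degree ≤ 2 and no
isolated vertices satisfies `f_o(G) ≥ |V(G)|/2`. -/
theorem stmt_15 :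
    (∀ t : ℕ, 2 ≤ t → t ≤ 2 * fo (SimpleGraph.pathGraph t)) ∧
    (∀ ℓ : ℕ, 3 ≤ ℓ → Even ℓ → ℓ ≤ 2 * fo (SimpleGraph.cycleGraph ℓ)) ∧
    (∀ (V : Type) [Fintype V] (G : SimpleGraph V) [DecidableRel G.Adj],
      G.Colorable 2 → (∀ v, G.degree v ≤ 2) → (∀ v, ∃ w, G.Adj v w) →
      Fintype.card V ≤ 2 * fo G) := by
  exact ⟨fun _ => le_two_mul_fo_pathGraph, fun _ => le_two_mul_fo_cycleGraph,
    fun _ _ _ _ => card_le_two_mul_fo⟩
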